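/- arXiv:1103.3546 — 2 statements merged into one kernel-verified Lean document; each statement's English description precedes it below -/
import Mathlib

section
/- The isometry group of the hyperbolic group ℍ_n (with its standard pairing) is isomorphic to SL(2, ℤ/n), and this group is generated by the two transvections s_{u₁} and s_{v₁}, where u₁ = (1,0) and v₁ = (0,1). -/
/-- omega_n = e^{2 pi i/n} as a unit of the complex numbers. -/
noncomputable def omegaU (n : ℕ) : ℂˣ :=
  Units.mk0 (Complex.exp (2 * Real.pi * Complex.I / n)) (Complex.exp_ne_zero _)

/-- Z-bilinearity of a pairing into the unit group of the complex numbers. -/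
def IsBilinPairing {H : Type*} [AddCommGroup H] (f : H → H → ℂˣ) : Prop :=
  (∀ a b c : H, f (a + b) c = f a c * f b c) ∧ (∀ a b c : H, f a (b + c) = f a b * f a c)

/-- Antisymmetry: <a,b> = <b,a>⁻¹. -/
def IsAntisymmPairing {H : Type*} [AddCommGroup H] (f : H → H → ℂˣ) : Prop :=
  ∀ a b : H, f a b = (f b a)⁻¹

/-- Nonsingularity of a pairing: <a,b> = 1 for all b implies a = 0. -/
def IsNonsingularPairing {H : Type*} [AddCommGroup H] (f : H → H → ℂˣ) : Prop :=
  ∀ a : H, (∀ b : H, f a b = 1) → a = 0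

/-- The standard pairing on the hyperbolic group H_n = Z/n × Z/n:
<(i,j),(k,l)> = omega_n^{il - jk}. -/
noncomputable def hypPair (n : ℕ) (a b : ZMod n × ZMod n) : ℂˣ :=
  omegaU n ^ (a.1 * b.2 - a.2 * b.1).val

/-- The group structure on `AddAut A` of the older library (composition), which the current
library replaced by an additive one. -/
instance addAutGroupOld (A : Type*) [Add A] : Group (AddAut A) where
  mul g h := AddEquiv.trans h g
  one := AddEquiv.refl _
  inv := AddEquiv.symm
  mul_assoc _ _ _ := rfl
  one_mul _ := rfl
  mul_one _ := rfl
  inv_mul_cancel := AddEquiv.self_trans_symm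

/-- The isometry group Sp(H) of a pairing, as a subgroup of the automorphism group. -/
def SpGroup {H : Type*} [AddCommGroup H] (f : H → H → ℂˣ) : Subgroup (AddAut H) where
  carrier := {e | ∀ a b : H, f (e a) (e b) = f a b}
  one_mem' := fun _ _ => rfl
  mul_mem' := by
    intro e g he hg a b
    have h1 : ∀ x, (e * g) x = e (g x) := fun x => rfl
    rw [h1, h1, he, hg]
  inv_mem' := by
    intro e he a b
    have := he (e⁻¹ a) (e⁻¹ b)
    have h2 : ∀ x, e (e⁻¹ x) = x := fun x => e.apply_symm_apply x
    rw [h2, h2] at this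
    exact this.symm

/-- e is a transvection s_{b,k} for the pairing f: for some nonzero b and k ∈ ℤ,
e sends a to a - k·j(a)·b where <b,a> = ω_m^{j(a)} and m is the order of b. -/
def IsTransvection {H : Type*} [AddCommGroup H] (f : H → H → ℂˣ) (e : AddAut H) : Prop :=
  ∃ b : H, b ≠ 0 ∧ ∃ k : ℤ, ∀ a : H, ∃ j : ℤ,
    f b a = omegaU (addOrderOf b) ^ j ∧ e a = a - (k * j) • b

/-- e is a transvection s_b (with k = 1) for the pairing f. -/
def IsTransvection1 {H : Type*} [AddCommGroup H] (f : H → H → ℂˣ) (e : AddAut H) : Prop :=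
  ∃ b : H, b ≠ 0 ∧ ∀ a : H, ∃ j : ℤ,
    f b a = omegaU (addOrderOf b) ^ j ∧ e a = a - j • b

/-- The transvection s_{u₁} with u₁ = (1,0): (x,y) ↦ (x - y, y). -/
def suAut (n : ℕ) : AddAut (ZMod n × ZMod n) :=
  { toFun := fun a => (a.1 - a.2, a.2)
    invFun := fun a => (a.1 + a.2, a.2)
    left_inv := fun a => by simp
    right_inv := fun a => by simp
    map_add' := fun a b => by
      simp only [Prod.fst_add, Prod.snd_add, Prod.mk_add_mk, Prod.mk.injEq]
      constructor <;> first | trivial | ring }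

/-- The transvection s_{v₁} with v₁ = (0,1): (x,y) ↦ (x, y + x). -/
def svAut (n : ℕ) : AddAut (ZMod n × ZMod n) :=
  { toFun := fun a => (a.1, a.2 + a.1)
    invFun := fun a => (a.1, a.2 - a.1)
    left_inv := fun a => by simp
    right_inv := fun a => by simp
    map_add' := fun a b => by
      simp only [Prod.fst_add, Prod.snd_add, Prod.mk_add_mk, Prod.mk.injEq]
      constructor <;> first | trivial | ring }

/-! Every additive map of `ℤ/n × ℤ/n` is `ℤ/n`-linear, so an automorphism is given by its
`2 × 2` matrix. Since `ω_n` is a primitive `n`-th root of unity, the pairing is preserved exactly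
when the form `a.1 * b.2 - a.2 * b.1` is, that is, when the matrix has determinant one.

Under this isomorphism `s_{u₁}` and `s_{v₁}` become `[[1, -1], [0, 1]]` and `[[1, 0], [1, 1]]`,
whose powers are all the elementary matrices. A Euclidean algorithm on the lower-left entry,
measured by its representative in `[0, n)`, reduces every matrix of `SL(2, ℤ/n)` to an upper
triangular one, and these are products of elementary matrices. -/

open Matrix MatrixGroups

lemma ZMod.exists_val_add_mul_lt_val {n : ℕ} [NeZero n] (a : ZMod n) {c : ZMod n} (hc : c ≠ 0) :
    ∃ t : ZMod n, (a + t * c).val < c.val := by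
  have hpos : 0 < c.val := (ZMod.val_pos).2 hc
  refine ⟨-((a.val / c.val : ℕ) : ZMod n), ?_⟩
  have hrem : a + -((a.val / c.val : ℕ) : ZMod n) * c = ((a.val % c.val : ℕ) : ZMod n) := by
    have := congrArg (Nat.cast : ℕ → ZMod n) (Nat.div_add_mod a.val c.val)
    push_cast [ZMod.natCast_val, ZMod.cast_id] at this
    linear_combination -this
  rw [hrem, ZMod.val_cast_of_lt ((Nat.mod_lt _ hpos).trans (ZMod.val_lt c))]
  exact Nat.mod_lt _ hpos

namespace SL2

variable {R : Type*} [CommRing R]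

def upper (t : R) : SL(2, R) := ⟨!![1, t; 0, 1], by simp⟩

def lower (t : R) : SL(2, R) := ⟨!![1, 0; t, 1], by simp⟩

def rot : SL(2, R) := ⟨!![0, -1; 1, 0], by simp⟩

lemma det_fin_two_eq_one (M : SL(2, R)) : M 0 0 * M 1 1 - M 0 1 * M 1 0 = 1 := by
  rw [← Matrix.det_fin_two]; exact M.det_coe

@[simp] lemma coe_upper (t : R) : (upper t : Matrix (Fin 2) (Fin 2) R) = !![1, t; 0, 1] := rfl

@[simp] lemma coe_lower (t : R) : (lower t : Matrix (Fin 2) (Fin 2) R) = !![1, 0; t, 1] := rfl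

@[simp] lemma coe_rot : ((rot : SL(2, R)) : Matrix (Fin 2) (Fin 2) R) = !![0, -1; 1, 0] := rfl

lemma upper_add (s t : R) : upper (s + t) = upper s * upper t := by
  ext i j; fin_cases i <;> fin_cases j <;> simp [add_comm]

lemma lower_add (s t : R) : lower (s + t) = lower s * lower t := by
  ext i j; fin_cases i <;> fin_cases j <;> simp

lemma upper_natCast_mul (k : ℕ) (t : R) : upper (k * t) = upper t ^ k := by
  induction k with
  | zero => ext i j; fin_cases i <;> fin_cases j <;> simp
  | succ k ih => rw [Nat.cast_succ, add_one_mul, upper_add, ih, pow_succ]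

lemma lower_natCast_mul (k : ℕ) (t : R) : lower (k * t) = lower t ^ k := by
  induction k with
  | zero => ext i j; fin_cases i <;> fin_cases j <;> simp
  | succ k ih => rw [Nat.cast_succ, add_one_mul, lower_add, ih, pow_succ]

lemma rot_eq : (rot : SL(2, R)) = upper (-1) * lower 1 * upper (-1) := by
  ext i j; fin_cases i <;> fin_cases j <;> simp

lemma rot_mul_upper_mul_apply_one_zero (t : R) (A : SL(2, R)) :
    (rot * upper t * A : SL(2, R)) 1 0 = A 0 0 + t * A 1 0 := by
  simp [Matrix.mul_apply, Fin.sum_univ_two]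

def elementary : Subgroup SL(2, R) := Subgroup.closure (Set.range upper ∪ Set.range lower)

lemma upper_mem_elementary (t : R) : upper t ∈ elementary :=
  Subgroup.subset_closure (Or.inl ⟨t, rfl⟩)

lemma lower_mem_elementary (t : R) : lower t ∈ elementary :=
  Subgroup.subset_closure (Or.inr ⟨t, rfl⟩)

lemma rot_mem_elementary : (rot : SL(2, R)) ∈ elementary := by
  rw [rot_eq]
  exact mul_mem (mul_mem (upper_mem_elementary _) (lower_mem_elementary _))
    (upper_mem_elementary _)

lemma mem_elementary_of_apply_one_zero_eq_zero {A : SL(2, R)} (hA : A 1 0 = 0) :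
    A ∈ elementary := by
  have hdet : A 0 0 * A 1 1 = 1 := by simpa [hA] using det_fin_two_eq_one A
  have key : A = upper (A 0 0) * lower (-A 1 1) * upper (A 0 0) * rot * upper (A 1 1 * A 0 1) := by
    ext i j; fin_cases i <;> fin_cases j <;> simp [Matrix.mul_apply, Fin.sum_univ_two, hA]
    all_goals grind
  rw [key]
  exact mul_mem (mul_mem (mul_mem (mul_mem (upper_mem_elementary _) (lower_mem_elementary _))
    (upper_mem_elementary _)) rot_mem_elementary) (upper_mem_elementary _)

def toAddAut (M : SL(2, R)) : AddAut (R × R) where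
  toFun v := (M 0 0 * v.1 + M 0 1 * v.2, M 1 0 * v.1 + M 1 1 * v.2)
  invFun v := (M 1 1 * v.1 - M 0 1 * v.2, M 0 0 * v.2 - M 1 0 * v.1)
  left_inv v := by
    have := det_fin_two_eq_one M
    ext <;> dsimp only <;> grind
  right_inv v := by
    have := det_fin_two_eq_one M
    ext <;> dsimp only <;> grind
  map_add' v w := by ext <;> dsimp only [Prod.fst_add, Prod.snd_add] <;> ring

@[simp] lemma toAddAut_apply (M : SL(2, R)) (v : R × R) :
    toAddAut M v = (M 0 0 * v.1 + M 0 1 * v.2, M 1 0 * v.1 + M 1 1 * v.2) := rfl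

lemma toAddAut_upper_neg_one (n : ℕ) : toAddAut (upper (-1 : ZMod n)) = suAut n := by
  ext v <;> simp [suAut, sub_eq_add_neg]

lemma toAddAut_lower_one (n : ℕ) : toAddAut (lower (1 : ZMod n)) = svAut n := by
  ext v <;> simp [svAut, add_comm]

variable {n : ℕ} [NeZero n]

lemma elementary_eq_top_zmod : (elementary : Subgroup SL(2, ZMod n)) = ⊤ := by
  suffices ∀ m : ℕ, ∀ A : SL(2, ZMod n), (A 1 0).val = m → A ∈ elementary from
    eq_top_iff.2 fun A _ => this _ A rfl
  intro m
  induction m using Nat.strong_induction_on with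
  | _ m ih =>
    intro A hA
    by_cases hc : A 1 0 = 0
    · exact mem_elementary_of_apply_one_zero_eq_zero hc
    obtain ⟨t, ht⟩ := ZMod.exists_val_add_mul_lt_val (A 0 0) hc
    have hB : rot * upper t * A ∈ elementary :=
      ih _ (hA ▸ rot_mul_upper_mul_apply_one_zero t A ▸ ht) _ rfl
    have hA' : A = (rot * upper t)⁻¹ * (rot * upper t * A) := by group
    rw [hA']
    exact mul_mem (inv_mem (mul_mem rot_mem_elementary (upper_mem_elementary t))) hB

lemma closure_upper_neg_one_lower_one_eq_top :
    Subgroup.closure {upper (-1), lower 1} = (⊤ : Subgroup SL(2, ZMod n)) := by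
  rw [eq_top_iff, ← elementary_eq_top_zmod, elementary, Subgroup.closure_le]
  rintro _ (⟨t, rfl⟩ | ⟨t, rfl⟩)
  · have : upper t = upper (-1) ^ (-t).val := by
      rw [← upper_natCast_mul, ZMod.natCast_val, ZMod.cast_id', id, mul_neg_one, neg_neg]
    rw [this]
    exact pow_mem (Subgroup.subset_closure (Set.mem_insert _ _)) _
  · have : lower t = lower 1 ^ t.val := by
      rw [← lower_natCast_mul, ZMod.natCast_val, ZMod.cast_id', id, mul_one]
    rw [this]
    exact pow_mem (Subgroup.subset_closure (Set.mem_insert_of_mem _ (Set.mem_singleton _))) _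

end SL2

section Isometry

open SL2

variable {n : ℕ}

lemma AddAut.apply_eq_fst_smul_add_snd_smul (e : AddAut (ZMod n × ZMod n))
    (v : ZMod n × ZMod n) : e v = v.1 • e (1, 0) + v.2 • e (0, 1) := by
  conv_lhs => rw [show v = v.1 • (1, 0) + v.2 • (0, 1) by ext <;> simp]
  rw [map_add, ZMod.map_smul, ZMod.map_smul]

def addAutToMatrix (e : AddAut (ZMod n × ZMod n)) : Matrix (Fin 2) (Fin 2) (ZMod n) :=
  !![(e (1, 0)).1, (e (0, 1)).1; (e (1, 0)).2, (e (0, 1)).2]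

lemma addAutToMatrix_mul (e g : AddAut (ZMod n × ZMod n)) :
    addAutToMatrix (e * g) = addAutToMatrix e * addAutToMatrix g := by
  change !![(e (g (1, 0))).1, (e (g (0, 1))).1; (e (g (1, 0))).2, (e (g (0, 1))).2] = _
  rw [e.apply_eq_fst_smul_add_snd_smul (g (1, 0)), e.apply_eq_fst_smul_add_snd_smul (g (0, 1))]
  ext i j; fin_cases i <;> fin_cases j <;> simp [addAutToMatrix, Matrix.mul_apply] <;> ring

lemma addAutToMatrix_toAddAut (M : SL(2, ZMod n)) : addAutToMatrix (toAddAut M) = M := by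
  ext i j; fin_cases i <;> fin_cases j <;> simp [addAutToMatrix]

lemma toAddAut_eq_of_coe_eq_addAutToMatrix {M : SL(2, ZMod n)} {e : AddAut (ZMod n × ZMod n)}
    (h : (M : Matrix (Fin 2) (Fin 2) (ZMod n)) = addAutToMatrix e) : toAddAut M = e := by
  ext v <;> rw [toAddAut_apply, e.apply_eq_fst_smul_add_snd_smul v, h] <;>
    simp [addAutToMatrix, mul_comm]

variable [NeZero n]

lemma omegaU_pow_val_injective : Function.Injective fun i : ZMod n => omegaU n ^ i.val := by
  intro i j h
  have hprim : IsPrimitiveRoot (Complex.exp (2 * Real.pi * Complex.I / n)) n :=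
    Complex.isPrimitiveRoot_exp n (NeZero.ne n)
  have h' := congrArg Units.val h
  simp only [omegaU, Units.val_pow_eq_pow_val, Units.val_mk0] at h'
  exact ZMod.val_injective n (hprim.pow_inj (ZMod.val_lt i) (ZMod.val_lt j) h')

lemma mem_SpGroup_hypPair_iff (e : AddAut (ZMod n × ZMod n)) :
    e ∈ SpGroup (hypPair n) ↔
      ∀ a b : ZMod n × ZMod n, (e a).1 * (e b).2 - (e a).2 * (e b).1 = a.1 * b.2 - a.2 * b.1 :=
  forall₂_congr fun _ _ => omegaU_pow_val_injective.eq_iff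

lemma toAddAut_mem_SpGroup (M : SL(2, ZMod n)) : toAddAut M ∈ SpGroup (hypPair n) := by
  rw [mem_SpGroup_hypPair_iff]
  intro a b
  simp only [toAddAut_apply]
  linear_combination (a.1 * b.2 - a.2 * b.1) * det_fin_two_eq_one M

lemma det_addAutToMatrix {e : AddAut (ZMod n × ZMod n)} (he : e ∈ SpGroup (hypPair n)) :
    (addAutToMatrix e).det = 1 := by
  have := (mem_SpGroup_hypPair_iff e).1 he (1, 0) (0, 1)
  simp only [mul_one, mul_zero, sub_zero] at this
  rw [addAutToMatrix, Matrix.det_fin_two_of]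
  linear_combination this

noncomputable def spGroupEquivSL : SpGroup (hypPair n) ≃* SL(2, ZMod n) where
  toFun e := ⟨addAutToMatrix e, det_addAutToMatrix e.2⟩
  invFun M := ⟨toAddAut M, toAddAut_mem_SpGroup M⟩
  left_inv _ := Subtype.ext (toAddAut_eq_of_coe_eq_addAutToMatrix rfl)
  right_inv M := Subtype.ext (addAutToMatrix_toAddAut M)
  map_mul' e g := Subtype.ext (addAutToMatrix_mul e.1 g.1)

end Isometry

/-- The isometry group of the hyperbolic group H_n is isomorphic to SL(2, Z/n) and is
generated by the two transvections s_{u₁} and s_{v₁}. -/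
theorem stmt8 (n : ℕ) (hn : 0 < n) :
    Nonempty (SpGroup (hypPair n) ≃* Matrix.SpecialLinearGroup (Fin 2) (ZMod n)) ∧
    Subgroup.closure {x : SpGroup (hypPair n) |
        (x : AddAut (ZMod n × ZMod n)) = suAut n ∨
        (x : AddAut (ZMod n × ZMod n)) = svAut n} = ⊤ := by
  have : NeZero n := ⟨hn.ne'⟩
  refine ⟨⟨spGroupEquivSL⟩, eq_top_iff.2 fun x _ => ?_⟩
  rw [← spGroupEquivSL.symm_apply_apply x]
  suffices Subgroup.closure {SL2.upper (-1 : ZMod n), SL2.lower 1} ≤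
      (Subgroup.closure _).comap (spGroupEquivSL (n := n)).symm.toMonoidHom from
    this (SL2.closure_upper_neg_one_lower_one_eq_top (n := n) ▸ Subgroup.mem_top (spGroupEquivSL x))
  rw [Subgroup.closure_le]
  rintro _ (rfl | rfl)
  · exact Subgroup.subset_closure (Or.inl (SL2.toAddAut_upper_neg_one n))
  · exact Subgroup.subset_closure (Or.inr (SL2.toAddAut_lower_one n))
end

section
/- Let a = (i,j) ∈ ℍ_n = ℤ/n × ℤ/n. If a has order n, then there exists A ∈ SL(2, ℤ/n) with A·a = (1,0). In general there exists A ∈ SL(2, ℤ/n) and l ∈ ℤ/n with A·a = (l,0). In particular, SL(2, ℤ/n) acts transitively on the elements of ℤ/n × ℤ/n of order n. -/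
/-!
Lift (i, j) to integers and write it as g • (i', j') with i', j' coprime, say u i' + v j' = 1.
The matrix [[u, v], [-j', i']] has determinant 1 and sends (i', j') to (1, 0), hence (i, j) to
(g, 0). Since SL(2, ℤ/n) acts by additive automorphisms it preserves orders, so if (i, j) has
order n then so has g, i.e. g is a unit, and the same construction applied to the coprime pair
(g, 0) reaches (1, 0).
-/
open Matrix
open scoped MatrixGroups

lemma Matrix.SpecialLinearGroup.exists_smul_eq_vecCons_one_zero {R : Type*} [CommRing R]
    {x y : R} (h : IsCoprime x y) : ∃ A : SL(2, R), A • ![x, y] = ![1, 0] := by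
  obtain ⟨u, v, huv⟩ := h
  refine ⟨⟨!![u, v; -y, x], by rw [det_fin_two_of]; linear_combination huv⟩, ?_⟩
  change !![u, v; -y, x] *ᵥ ![x, y] = ![1, 0]
  ext i
  fin_cases i
  · simpa [mulVec, dotProduct] using huv
  · simp [mulVec, dotProduct, mul_comm]

lemma addOrderOf_vecCons_vecCons {M : Type*} [AddCommMonoid M] (x y : M) :
    addOrderOf ![x, y] = addOrderOf (x, y) :=
  ((LinearEquiv.finTwoArrow ℕ M).toAddEquiv.addOrderOf_eq ![x, y]).symm

namespace ZMod

lemma isUnit_of_addOrderOf_eq {n : ℕ} [NeZero n] {l : ZMod n} (h : addOrderOf l = n) :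
    IsUnit l := by
  rw [← natCast_zmod_val l, addOrderOf_coe _ (NeZero.ne n), Nat.div_eq_self] at h
  rw [← natCast_zmod_val l, isUnit_iff_coprime, Nat.coprime_comm]
  exact h.resolve_left (NeZero.ne n)

lemma exists_SL2_smul_eq_vecCons_zero {n : ℕ} (x y : ZMod n) :
    ∃ (A : SL(2, ZMod n)) (l : ZMod n), A • ![x, y] = ![l, 0] := by
  obtain ⟨i, rfl⟩ := intCast_surjective x
  obtain ⟨j, rfl⟩ := intCast_surjective y
  obtain ⟨i', j', hi, hj, hunit⟩ := extract_gcd i j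
  generalize gcd i j = g at hi hj
  have hcop : IsCoprime (i' : ZMod n) j' :=
    (gcd_isUnit_iff_isRelPrime.mp hunit).isCoprime.intCast
  obtain ⟨A, hA⟩ := SpecialLinearGroup.exists_smul_eq_vecCons_one_zero hcop
  refine ⟨A, g, ?_⟩
  have hscale : ![(i : ZMod n), (j : ZMod n)] = (g : ZMod n) • ![(i' : ZMod n), j'] := by
    rw [hi, hj]
    simp
  rw [hscale, smul_comm, hA]
  simp

lemma exists_SL2_smul_eq_vecCons_one_zero {n : ℕ} [NeZero n] {x y : ZMod n}
    (h : addOrderOf (x, y) = n) : ∃ A : SL(2, ZMod n), A • ![x, y] = ![1, 0] := by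
  obtain ⟨A, l, hA⟩ := exists_SL2_smul_eq_vecCons_zero x y
  have hl : addOrderOf l = n := by
    have := (DistribMulAction.toAddEquiv (Fin 2 → ZMod n) A).addOrderOf_eq ![x, y]
    rw [DistribMulAction.toAddEquiv_apply, hA, addOrderOf_vecCons_vecCons,
      addOrderOf_vecCons_vecCons, h, Prod.addOrderOf] at this
    simpa using this
  obtain ⟨B, hB⟩ := SpecialLinearGroup.exists_smul_eq_vecCons_one_zero
    (isCoprime_zero_right.mpr (isUnit_of_addOrderOf_eq hl))
  exact ⟨B * A, by rw [mul_smul, hA, hB]⟩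

end ZMod

/-- Any a ∈ Z/n × Z/n can be moved by SL(2, Z/n) to a vector (l, 0); if a has order n
it can be moved to (1,0); in particular SL(2, Z/n) acts transitively on elements of
order n. -/
theorem stmt11 (n : ℕ) (hn : 0 < n) (a : ZMod n × ZMod n) :
    (∃ A : Matrix.SpecialLinearGroup (Fin 2) (ZMod n), ∃ l : ZMod n,
      (A : Matrix (Fin 2) (Fin 2) (ZMod n)).mulVec ![a.1, a.2] = ![l, 0]) ∧
    (addOrderOf a = n → ∃ A : Matrix.SpecialLinearGroup (Fin 2) (ZMod n),
      (A : Matrix (Fin 2) (Fin 2) (ZMod n)).mulVec ![a.1, a.2] = ![1, 0]) ∧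
    (∀ b : ZMod n × ZMod n, addOrderOf a = n → addOrderOf b = n →
      ∃ A : Matrix.SpecialLinearGroup (Fin 2) (ZMod n),
        (A : Matrix (Fin 2) (Fin 2) (ZMod n)).mulVec ![a.1, a.2] = ![b.1, b.2]) := by
  have : NeZero n := ⟨hn.ne'⟩
  refine ⟨ZMod.exists_SL2_smul_eq_vecCons_zero a.1 a.2,
    ZMod.exists_SL2_smul_eq_vecCons_one_zero, fun b ha hb => ?_⟩
  obtain ⟨A, hA⟩ := ZMod.exists_SL2_smul_eq_vecCons_one_zero ha
  obtain ⟨B, hB⟩ := ZMod.exists_SL2_smul_eq_vecCons_one_zero hb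
  exact ⟨B⁻¹ * A, show (B⁻¹ * A) • ![a.1, a.2] = _ by rw [mul_smul, hA, ← hB, inv_smul_smul]⟩
end
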